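/- arXiv:2504.04362 — 12 statements merged into one kernel-verified Lean document; each statement's English description precedes it below -/
import Mathlib

section
/- Let Z1 = HZ(G1c, G1b, c1, A1c, A1b, b1) and Z2 = HZ(G2c, G2b, c2, A2c, A2b, b2) be hybrid zonotopes in ℝ^n. Then the Minkowski sum Z1 ⊕ Z2 = {z1 + z2 : z1 ∈ Z1, z2 ∈ Z2} is equal to the hybrid zonotope HZ([G1c G2c], [G1b G2b], c1 + c2, blockdiag(A1c, A2c), blockdiag(A1b, A2b), [b1; b2]), where [· ·] denotes horizontal concatenation, blockdiag denotes the block-diagonal matrix, and [·;·] denotes vertical concatenation. -/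
open Matrix

/-- The hybrid zonotope `HZ(Gc, Gb, c, Ac, Ab, b)`:
the set `{Gc ξc + Gb ξb + c : ξc ∈ [-1,1]^{ng}, ξb ∈ {-1,1}^{nb}, Ac ξc + Ab ξb = b}`. -/
def HZ {n ng nb nc : Type*} [Fintype ng] [Fintype nb] [Fintype nc]
    (Gc : Matrix n ng ℝ) (Gb : Matrix n nb ℝ) (c : n → ℝ)
    (Ac : Matrix nc ng ℝ) (Ab : Matrix nc nb ℝ) (b : nc → ℝ) : Set (n → ℝ) :=
  {x | ∃ ξc : ng → ℝ, ∃ ξb : nb → ℝ,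
    (∀ i, |ξc i| ≤ 1) ∧ (∀ i, ξb i = 1 ∨ ξb i = -1) ∧
    Ac *ᵥ ξc + Ab *ᵥ ξb = b ∧ x = Gc *ᵥ ξc + Gb *ᵥ ξb + c}

/-- Minkowski sum of two hybrid zonotopes. -/
theorem minkowski_sum_hybrid_zonotope {n ng1 nb1 nc1 ng2 nb2 nc2 : ℕ}
    (G1c : Matrix (Fin n) (Fin ng1) ℝ) (G1b : Matrix (Fin n) (Fin nb1) ℝ) (c1 : Fin n → ℝ)
    (A1c : Matrix (Fin nc1) (Fin ng1) ℝ) (A1b : Matrix (Fin nc1) (Fin nb1) ℝ) (b1 : Fin nc1 → ℝ)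
    (G2c : Matrix (Fin n) (Fin ng2) ℝ) (G2b : Matrix (Fin n) (Fin nb2) ℝ) (c2 : Fin n → ℝ)
    (A2c : Matrix (Fin nc2) (Fin ng2) ℝ) (A2b : Matrix (Fin nc2) (Fin nb2) ℝ) (b2 : Fin nc2 → ℝ) :
    {z | ∃ z1 ∈ HZ G1c G1b c1 A1c A1b b1, ∃ z2 ∈ HZ G2c G2b c2 A2c A2b b2, z = z1 + z2}
      = HZ (fromCols G1c G2c) (fromCols G1b G2b) (c1 + c2)
          (fromBlocks A1c 0 0 A2c) (fromBlocks A1b 0 0 A2b) (Sum.elim b1 b2) := by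
  ext z
  constructor
  · rintro ⟨z1, ⟨ξc1, ξb1, h1, h2, h3, h4⟩, z2, ⟨ξc2, ξb2, g1, g2, g3, g4⟩, rfl⟩
    refine ⟨Sum.elim ξc1 ξc2, Sum.elim ξb1 ξb2, ?_, ?_, ?_, ?_⟩
    · rintro (i | i) <;> simp [h1, g1]
    · rintro (i | i) <;> simp [h2, g2]
    · ext (i | i) <;>
        simp [fromBlocks_mulVec, Sum.elim_comp_inl, Sum.elim_comp_inr, ← h3, ← g3]
    · rw [h4, g4]
      ext i
      simp [fromCols_mulVec_sumElim]
      ring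
  · rintro ⟨ξc, ξb, h1, h2, h3, rfl⟩
    refine ⟨G1c *ᵥ (ξc ∘ Sum.inl) + G1b *ᵥ (ξb ∘ Sum.inl) + c1,
      ⟨ξc ∘ Sum.inl, ξb ∘ Sum.inl, fun i => h1 _, fun i => h2 _, ?_, rfl⟩,
      G2c *ᵥ (ξc ∘ Sum.inr) + G2b *ᵥ (ξb ∘ Sum.inr) + c2,
      ⟨ξc ∘ Sum.inr, ξb ∘ Sum.inr, fun i => h1 _, fun i => h2 _, ?_, rfl⟩, ?_⟩
    · ext i
      have := congrFun h3 (Sum.inl i)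
      simpa [fromBlocks_mulVec] using this
    · ext i
      have := congrFun h3 (Sum.inr i)
      simpa [fromBlocks_mulVec] using this
    · ext i
      simp [mulVec, fromCols, dotProduct, Fintype.sum_sum_type]
      ring
end

section
/- Let Z1 = HZ(G1c, G1b, c1, A1c, A1b, b1) be a hybrid zonotope in ℝ^n, Z3 = HZ(G3c, G3b, c3, A3c, A3b, b3) a hybrid zonotope in ℝ^m, and R ∈ ℝ^{m×n}. Then the generalized intersection Z1 ∩_R Z3 = {x ∈ Z1 : R x ∈ Z3} is equal to the hybrid zonotope HZ([G1c 0], [G1b 0], c1, Ac', Ab', b'), where Ac' is the block matrix with rows [A1c 0], [0 A3c], [R·G1c −G3c], Ab' is the block matrix with rows [A1b 0], [0 A3b], [R·G1b −G3b], and b' = [b1; b3; c3 − R·c1]. -/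
open Matrix

/-- Generalized intersection `Z1 ∩_R Z3 = {x ∈ Z1 : R x ∈ Z3}` of hybrid zonotopes. -/
theorem generalized_intersection_hybrid_zonotope {n m ng1 nb1 nc1 ng3 nb3 nc3 : ℕ}
    (G1c : Matrix (Fin n) (Fin ng1) ℝ) (G1b : Matrix (Fin n) (Fin nb1) ℝ) (c1 : Fin n → ℝ)
    (A1c : Matrix (Fin nc1) (Fin ng1) ℝ) (A1b : Matrix (Fin nc1) (Fin nb1) ℝ) (b1 : Fin nc1 → ℝ)
    (G3c : Matrix (Fin m) (Fin ng3) ℝ) (G3b : Matrix (Fin m) (Fin nb3) ℝ) (c3 : Fin m → ℝ)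
    (A3c : Matrix (Fin nc3) (Fin ng3) ℝ) (A3b : Matrix (Fin nc3) (Fin nb3) ℝ) (b3 : Fin nc3 → ℝ)
    (R : Matrix (Fin m) (Fin n) ℝ) :
    {x ∈ HZ G1c G1b c1 A1c A1b b1 | R *ᵥ x ∈ HZ G3c G3b c3 A3c A3b b3}
      = HZ (fromCols G1c (0 : Matrix (Fin n) (Fin ng3) ℝ))
          (fromCols G1b (0 : Matrix (Fin n) (Fin nb3) ℝ)) c1
          (fromRows (fromCols A1c 0)
            (fromRows (fromCols 0 A3c) (fromCols (R * G1c) (-G3c))))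
          (fromRows (fromCols A1b 0)
            (fromRows (fromCols 0 A3b) (fromCols (R * G1b) (-G3b))))
          (Sum.elim b1 (Sum.elim b3 (c3 - R *ᵥ c1))) := by
  ext x
  simp only [Set.mem_setOf_eq, HZ]
  constructor
  · rintro ⟨⟨ξc1, ξb1, hc1, hb1, heq1, hx1⟩, ξc3, ξb3, hc3, hb3, heq3, hx3⟩
    refine ⟨Sum.elim ξc1 ξc3, Sum.elim ξb1 ξb3, ?_, ?_, ?_, ?_⟩
    · rintro (i | i) <;> [exact hc1 i; exact hc3 i]
    · rintro (i | i) <;> [exact hb1 i; exact hb3 i]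
    · have key : R *ᵥ (G1c *ᵥ ξc1) + -(G3c *ᵥ ξc3) + (R *ᵥ (G1b *ᵥ ξb1) + -(G3b *ᵥ ξb3))
          = c3 - R *ᵥ c1 := by
        have h := hx3
        rw [hx1] at h
        simp only [mulVec_add] at h
        linear_combination h
      rw [fromRows_mulVec, fromRows_mulVec, fromCols_mulVec_sumElim,
        fromCols_mulVec_sumElim, fromRows_mulVec, fromRows_mulVec,
        fromCols_mulVec_sumElim, fromCols_mulVec_sumElim,
        fromCols_mulVec_sumElim, fromCols_mulVec_sumElim]
      funext i
      rcases i with i | i | i <;>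
        simp only [Pi.add_apply, Sum.elim_inl, Sum.elim_inr, zero_mulVec, mulVec_zero,
          add_zero, zero_add, neg_mulVec, mulVec_mulVec, Pi.zero_apply]
      · exact congrFun heq1 i
      · exact congrFun heq3 i
      · have := congrFun key i
        simp only [Pi.add_apply, Pi.neg_apply, Pi.sub_apply, mulVec_mulVec] at this ⊢
        linarith
    · rw [fromCols_mulVec_sumElim, fromCols_mulVec_sumElim, hx1]
      simp
  · rintro ⟨ξc, ξb, hc, hb, heq, hx⟩
    have hξc : Sum.elim (ξc ∘ Sum.inl) (ξc ∘ Sum.inr) = ξc := Sum.elim_comp_inl_inr ξc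
    have hξb : Sum.elim (ξb ∘ Sum.inl) (ξb ∘ Sum.inr) = ξb := Sum.elim_comp_inl_inr ξb
    rw [← hξc, ← hξb] at heq hx
    rw [fromCols_mulVec_sumElim, fromCols_mulVec_sumElim] at hx
    simp only [zero_mulVec, add_zero] at hx
    rw [fromRows_mulVec, fromRows_mulVec, fromCols_mulVec_sumElim,
      fromCols_mulVec_sumElim, fromRows_mulVec, fromRows_mulVec,
      fromCols_mulVec_sumElim, fromCols_mulVec_sumElim,
      fromCols_mulVec_sumElim, fromCols_mulVec_sumElim] at heq
    simp only [zero_mulVec, mulVec_zero, add_zero, zero_add, neg_mulVec, mulVec_mulVec] at heq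
    have h1 : A1c *ᵥ (ξc ∘ Sum.inl) + A1b *ᵥ (ξb ∘ Sum.inl) = b1 := by
      funext i
      have := congrFun heq (Sum.inl i)
      simpa using this
    have h2 : A3c *ᵥ (ξc ∘ Sum.inr) + A3b *ᵥ (ξb ∘ Sum.inr) = b3 := by
      funext i
      have := congrFun heq (Sum.inr (Sum.inl i))
      simpa using this
    have h3 : R *ᵥ (G1c *ᵥ (ξc ∘ Sum.inl)) + -(G3c *ᵥ (ξc ∘ Sum.inr))
        + (R *ᵥ (G1b *ᵥ (ξb ∘ Sum.inl)) + -(G3b *ᵥ (ξb ∘ Sum.inr))) = c3 - R *ᵥ c1 := by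
      funext i
      have := congrFun heq (Sum.inr (Sum.inr i))
      simpa [mulVec_mulVec] using this
    refine ⟨⟨ξc ∘ Sum.inl, ξb ∘ Sum.inl, fun i => hc _, fun i => hb _, h1, hx⟩,
      ξc ∘ Sum.inr, ξb ∘ Sum.inr, fun i => hc _, fun i => hb _, h2, ?_⟩
    rw [hx]
    simp only [mulVec_add]
    linear_combination h3
end

section
/- Let Z1 = HZ(G1c, G1b, c1, A1c, A1b, b1) be a hybrid zonotope in ℝ^n, R ∈ ℝ^{m×n}, l ∈ ℝ^m, ρ ∈ ℝ, and let H⁻ = {z ∈ ℝ^m : lᵀz ≤ ρ} be a halfspace. Define d_m = ρ − lᵀR c1 + Σ_{i=1}^{n_g} |lᵀR g1^{(c,i)}| + Σ_{i=1}^{n_b} |lᵀR g1^{(b,i)}|, where g1^{(c,i)} and g1^{(b,i)} denote the i-th columns of G1c and G1b respectively. Assume d_m > 0. Then {x ∈ Z1 : lᵀR x ≤ ρ} is equal to the hybrid zonotope HZ([G1c 0], G1b, c1, Ac', Ab', b'), where Ac' is the block matrix with rows [A1c 0] and [lᵀR G1c d_m/2], Ab' is the block matrix with rows [A1b] and [lᵀR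 G1b], and b' = [b1; ρ − lᵀR c1 − d_m/2]. -/
open Matrix

lemma abs_dot_le {k : ℕ} (a ξ : Fin k → ℝ) (h : ∀ i, |ξ i| ≤ 1) :
    |a ⬝ᵥ ξ| ≤ ∑ i, |a i| := by
  calc |a ⬝ᵥ ξ| ≤ ∑ i, |a i * ξ i| := Finset.abs_sum_le_sum_abs _ _
    _ ≤ ∑ i, |a i| := by
        refine Finset.sum_le_sum fun i _ => ?_
        rw [abs_mul]
        calc |a i| * |ξ i| ≤ |a i| * 1 := by
              exact mul_le_mul_of_nonneg_left (h i) (abs_nonneg _)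
          _ = |a i| := mul_one _

/-- Generalized intersection of a hybrid zonotope with the halfspace
`H⁻ = {z : lᵀ z ≤ ρ}`, i.e. `{x ∈ Z1 : lᵀ R x ≤ ρ}`. -/
theorem halfspace_intersection_hybrid_zonotope {n m ng nb nc : ℕ}
    (G1c : Matrix (Fin n) (Fin ng) ℝ) (G1b : Matrix (Fin n) (Fin nb) ℝ) (c1 : Fin n → ℝ)
    (A1c : Matrix (Fin nc) (Fin ng) ℝ) (A1b : Matrix (Fin nc) (Fin nb) ℝ) (b1 : Fin nc → ℝ)
    (R : Matrix (Fin m) (Fin n) ℝ) (l : Fin m → ℝ) (ρ : ℝ) (dm : ℝ)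
    (hdm : dm = ρ - l ⬝ᵥ (R *ᵥ c1)
        + ∑ i, |(l ᵥ* (R * G1c)) i| + ∑ i, |(l ᵥ* (R * G1b)) i|)
    (hdm_pos : 0 < dm) :
    {x ∈ HZ G1c G1b c1 A1c A1b b1 | l ⬝ᵥ (R *ᵥ x) ≤ ρ}
      = HZ (fromCols G1c (0 : Matrix (Fin n) (Fin 1) ℝ)) G1b c1
          (fromRows (fromCols A1c (0 : Matrix (Fin nc) (Fin 1) ℝ))
            (fromCols (Matrix.of fun (_ : Fin 1) j => (l ᵥ* (R * G1c)) j)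
              (Matrix.of fun (_ : Fin 1) (_ : Fin 1) => dm / 2)))
          (fromRows A1b (Matrix.of fun (_ : Fin 1) j => (l ᵥ* (R * G1b)) j))
          (Sum.elim b1 (fun _ => ρ - l ⬝ᵥ (R *ᵥ c1) - dm / 2)) := by
  have hd2 : (0:ℝ) < dm / 2 := by linarith
  set a : Fin ng → ℝ := l ᵥ* (R * G1c) with ha
  set bb : Fin nb → ℝ := l ᵥ* (R * G1b) with hbb
  have key : ∀ (ξc : Fin ng → ℝ) (ξb : Fin nb → ℝ) (x : Fin n → ℝ),
      x = G1c *ᵥ ξc + G1b *ᵥ ξb + c1 →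
      l ⬝ᵥ (R *ᵥ x) = a ⬝ᵥ ξc + bb ⬝ᵥ ξb + l ⬝ᵥ (R *ᵥ c1) := by
    intro ξc ξb x hx
    subst hx
    simp only [mulVec_add, dotProduct_add, ha, hbb, ← mulVec_mulVec, dotProduct_mulVec,
      vecMul_vecMul]
  ext x
  simp only [Set.mem_setOf_eq, HZ]
  constructor
  · rintro ⟨⟨ξc, ξb, hξc, hξb, hA, hx⟩, hle⟩
    set s := a ⬝ᵥ ξc with hs
    set t := bb ⬝ᵥ ξb with ht
    have hlx := key ξc ξb x hx
    have hst_le : s + t ≤ ρ - l ⬝ᵥ (R *ᵥ c1) := by linarith [hle, hlx.symm] 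
    have hs_lb : -(∑ i, |a i|) ≤ s :=
      neg_le_of_abs_le (abs_dot_le a ξc hξc)
    have ht_lb : -(∑ i, |bb i|) ≤ t := by
      have hb1 : ∀ i, |ξb i| ≤ 1 := fun i => by rcases hξb i with h | h <;> simp [h]
      exact neg_le_of_abs_le (abs_dot_le bb ξb hb1)
    have hst_ub : 0 ≤ ρ - l ⬝ᵥ (R *ᵥ c1) - (s + t) := by linarith
    have hst_lb : ρ - l ⬝ᵥ (R *ᵥ c1) - (s + t) ≤ dm := by rw [hdm]; linarith
    set ξnew : ℝ := (ρ - l ⬝ᵥ (R *ᵥ c1) - dm / 2 - s - t) / (dm / 2) with hξnew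
    refine ⟨Sum.elim ξc (fun _ => ξnew), ξb, ?_, hξb, ?_, ?_⟩
    · rintro (i | i)
      · exact hξc i
      · simp only [Sum.elim_inr, hξnew]
        rw [abs_div, abs_of_pos hd2, div_le_one hd2]
        rw [abs_le]
        constructor <;> linarith
    · rw [fromRows_mulVec, fromRows_mulVec, fromCols_mulVec_sumElim, zero_mulVec,
        add_zero]
      ext (i | i)
      · have := congrFun hA i
        simpa using this
      · simp only [Sum.elim_inr, Pi.add_apply, fromCols_mulVec_sumElim]
        have h1 : (Matrix.of fun (_ : Fin 1) j => a j) *ᵥ ξc = fun _ => s := by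
          ext j; simp [mulVec, hs]
        have h2 : (Matrix.of fun (_ : Fin 1) (_ : Fin 1) => dm / 2) *ᵥ (fun _ => ξnew)
            = fun _ => (dm/2) * ξnew := by
          ext j; simp [mulVec, dotProduct]
        have h3 : (Matrix.of fun (_ : Fin 1) j => bb j) *ᵥ ξb = fun _ => t := by
          ext j; simp [mulVec, ht]
        rw [h1, h2, h3]
        simp only [Pi.add_apply]
        rw [hξnew]
        field_simp
        ring
    · rw [fromCols_mulVec_sumElim, zero_mulVec, add_zero]
      exact hx
  · rintro ⟨ξ, ξb, hξ, hξb, hA, hx⟩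
    have hξdecomp : ξ = Sum.elim (ξ ∘ Sum.inl) (ξ ∘ Sum.inr) := by
      ext (i | i) <;> rfl
    set ξc := ξ ∘ Sum.inl with hξcdef
    set ξnew := ξ (Sum.inr 0) with hξnewdef
    rw [hξdecomp, fromCols_mulVec_sumElim, zero_mulVec, add_zero] at hx
    rw [hξdecomp, fromRows_mulVec, fromRows_mulVec] at hA
    have hAtop : A1c *ᵥ ξc + A1b *ᵥ ξb = b1 := by
      funext i
      have := congrFun hA (Sum.inl i)
      simpa [fromCols_mulVec_sumElim] using this
    have hAbot := congrFun hA (Sum.inr 0)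
    simp only [Sum.elim_inr, Pi.add_apply, fromCols_mulVec_sumElim] at hAbot
    have h1 : ((Matrix.of fun (_ : Fin 1) j => a j) *ᵥ ξc) 0 = a ⬝ᵥ ξc := by
      simp [mulVec]
    have h2 : ((Matrix.of fun (_ : Fin 1) (_ : Fin 1) => dm / 2) *ᵥ (ξ ∘ Sum.inr)) 0
        = (dm/2) * ξnew := by
      simp [mulVec, dotProduct, hξnewdef]
    have h3 : ((Matrix.of fun (_ : Fin 1) j => bb j) *ᵥ ξb) 0 = bb ⬝ᵥ ξb := by
      simp [mulVec]
    rw [h1, h2, h3] at hAbot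
    have hξnew_le : |ξnew| ≤ 1 := hξ (Sum.inr 0)
    have hlx := key ξc ξb x hx
    refine ⟨⟨ξc, ξb, fun i => hξ (Sum.inl i), hξb, hAtop, hx⟩, ?_⟩
    rw [hlx]
    have : (dm/2) * ξnew ≥ -(dm/2) := by
      have := (abs_le.mp hξnew_le).1
      nlinarith
    linarith
end

section
/- Let A ∈ ℝ^{n×n}, B ∈ ℝ^{n×m}, and suppose the data matrices X₋ ∈ ℝ^{n×T}, U₋ ∈ ℝ^{m×T}, X₊ ∈ ℝ^{n×T} satisfy X₊ = A X₋ + B U₋ + W* for some noise matrix W* belonging to the matrix zonotope MZ(C₀, G₁, …, G_h) of n×T matrices. Let D = [X₋; U₋] ∈ ℝ^{(n+m)×T} (vertical stacking) and suppose D has a right inverse D† ∈ ℝ^{T×(n+m)}, i.e., D D† = I_{n+m}. Then the true system matrix [A B] ∈ ℝ^{n×(n+m)} (horizontal concatenation) belongs to the set M_Σ = {(X₊ − W) D† : W ∈ MZ(C₀, G₁, …, G_h)}. -/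
open Matrix

/-- The matrix zonotope `MZ(C₀, G₁, …, G_h)`:
the set `{C₀ + ∑ j, β j • G j : β ∈ [-1,1]^h}`. -/
def MatZono {n T h : Type*} [Fintype h] (C0 : Matrix n T ℝ) (G : h → Matrix n T ℝ) :
    Set (Matrix n T ℝ) :=
  {W | ∃ β : h → ℝ, (∀ j, |β j| ≤ 1) ∧ W = C0 + ∑ j, β j • G j}

/-- The true system matrix `[A B]` belongs to the data-driven family of models
`M_Σ = {(X₊ − W) D† : W ∈ MZ(C₀, G₁, …, G_h)}`. -/
theorem true_model_in_family {n m T h : ℕ}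
    (A : Matrix (Fin n) (Fin n) ℝ) (B : Matrix (Fin n) (Fin m) ℝ)
    (Xminus : Matrix (Fin n) (Fin T) ℝ) (Uminus : Matrix (Fin m) (Fin T) ℝ)
    (Xplus : Matrix (Fin n) (Fin T) ℝ)
    (C0 : Matrix (Fin n) (Fin T) ℝ) (G : Fin h → Matrix (Fin n) (Fin T) ℝ)
    (Wstar : Matrix (Fin n) (Fin T) ℝ)
    (hWstar : Wstar ∈ MatZono C0 G)
    (hdata : Xplus = A * Xminus + B * Uminus + Wstar)
    (Dpinv : Matrix (Fin T) (Fin n ⊕ Fin m) ℝ)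
    (hDpinv : fromRows Xminus Uminus * Dpinv = 1) :
    fromCols A B ∈ {M | ∃ W ∈ MatZono C0 G, M = (Xplus - W) * Dpinv} := by
  refine ⟨Wstar, hWstar, ?_⟩
  have : Xplus - Wstar = fromCols A B * fromRows Xminus Uminus := by
    rw [fromCols_mul_fromRows, hdata]; abel
  rw [this, Matrix.mul_assoc, hDpinv, Matrix.mul_one]
end

section
/- Let A ∈ ℝ^{n×n}, B ∈ ℝ^{n×m}, and suppose the data matrices X₋ ∈ ℝ^{n×T}, U₋ ∈ ℝ^{m×T}, X₊ ∈ ℝ^{n×T} satisfy X₊ = A X₋ + B U₋ + W* for some W* in the matrix zonotope MZ(C₀, G₁, …, G_h) of n×T matrices, and that D = [X₋; U₋] has a right inverse D† with D D† = I_{n+m}. Let M_Σ = {(X₊ − W) D† : W ∈ MZ(C₀, G₁, …, G_h)}. Then for every state x ∈ ℝ^n, every input u ∈ ℝ^m, and every process noise w in the zonotope Z(c_w, G_w) ⊆ ℝ^n, the true successor state A x + B u + w belongs to the set {M' · [x; u] + w' : M' ∈ M_Σ, w' ∈ Z(c_w, G_w)}, where [x; u] ∈ ℝ^{n+m} denotes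 the stacked vector. -/
open Matrix

/-- The zonotope `Z(c, G) = {c + Gξ : ξ ∈ [-1,1]^p}`. -/
def Zono {n p : Type*} [Fintype p] (c : n → ℝ) (G : Matrix n p ℝ) : Set (n → ℝ) :=
  {x | ∃ ξ : p → ℝ, (∀ i, |ξ i| ≤ 1) ∧ x = c + G *ᵥ ξ}

/-- The true successor state `A x + B u + w` is contained in the data-driven one-step
reachable set `{M' [x; u] + w' : M' ∈ M_Σ, w' ∈ Z(c_w, G_w)}`. -/
theorem successor_in_data_driven_reach {n m T h p : ℕ}
    (A : Matrix (Fin n) (Fin n) ℝ) (B : Matrix (Fin n) (Fin m) ℝ)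
    (Xminus : Matrix (Fin n) (Fin T) ℝ) (Uminus : Matrix (Fin m) (Fin T) ℝ)
    (Xplus : Matrix (Fin n) (Fin T) ℝ)
    (C0 : Matrix (Fin n) (Fin T) ℝ) (G : Fin h → Matrix (Fin n) (Fin T) ℝ)
    (Wstar : Matrix (Fin n) (Fin T) ℝ)
    (hWstar : Wstar ∈ MatZono C0 G)
    (hdata : Xplus = A * Xminus + B * Uminus + Wstar)
    (Dpinv : Matrix (Fin T) (Fin n ⊕ Fin m) ℝ)
    (hDpinv : fromRows Xminus Uminus * Dpinv = 1)
    (cw : Fin n → ℝ) (Gw : Matrix (Fin n) (Fin p) ℝ)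
    (x : Fin n → ℝ) (u : Fin m → ℝ) (w : Fin n → ℝ) (hw : w ∈ Zono cw Gw) :
    A *ᵥ x + B *ᵥ u + w ∈
      {z | ∃ M' ∈ {M | ∃ W ∈ MatZono C0 G, M = (Xplus - W) * Dpinv},
        ∃ w' ∈ Zono cw Gw, z = M' *ᵥ Sum.elim x u + w'} := by
  refine ⟨(Xplus - Wstar) * Dpinv, ⟨Wstar, hWstar, rfl⟩, w, hw, ?_⟩
  have h1 : Xplus - Wstar = fromCols A B * fromRows Xminus Uminus := by
    rw [hdata, fromCols_mul_fromRows]; abel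
  rw [h1, Matrix.mul_assoc, hDpinv, Matrix.mul_one, fromCols_mulVec_sumElim]
end

section
/- Let C ∈ ℝ^{p×n} admit a decomposition C = P₁ Σ V₁ᵀ where P₁ ∈ ℝ^{p×p} is orthogonal (P₁ᵀP₁ = P₁P₁ᵀ = I_p), Σ ∈ ℝ^{p×p} is invertible, V₁ ∈ ℝ^{n×p} satisfies V₁ᵀV₁ = I_p, and V₂ ∈ ℝ^{n×(n−p)} satisfies V₁ᵀV₂ = 0. Given a measurement y ∈ ℝ^p, a noise zonotope Z(c_v, G_v) with G_v ∈ ℝ^{p×n_v}, and a scalar M > 0, define c_{x|y} = V₁Σ⁻¹P₁ᵀ(y − c_v) and G_{x|y} = [V₁Σ⁻¹P₁ᵀG_v M·V₂] ∈ ℝ^{n×(n_v+(n−p))}. Then C c_{x|y} = y − c_v and C G_{x|y} = [G_v 0]; consequently every point x of the zonotope Z(c_{x|y}, G_{x|y}) satisfies C x ∈ {y − c_v − G_v ξ : ξ ∈ [-1,1]^{n_v}}. -/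
open Matrix

/-- Properties of the reverse-mapping measurement zonotope: `C c_{x|y} = y − c_v`,
`C G_{x|y} = [G_v 0]`, and consequently every point `x` of `Z(c_{x|y}, G_{x|y})`
satisfies `C x ∈ {y − c_v − G_v ξ : ξ ∈ [-1,1]^{n_v}}`. -/
theorem reverse_mapping_zonotope_properties {n p nv : ℕ}
    (C : Matrix (Fin p) (Fin n) ℝ)
    (P1 Sg : Matrix (Fin p) (Fin p) ℝ)
    (V1 : Matrix (Fin n) (Fin p) ℝ) (V2 : Matrix (Fin n) (Fin (n - p)) ℝ)
    (hP1 : P1ᵀ * P1 = 1) (hP1' : P1 * P1ᵀ = 1)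
    (hSg : IsUnit Sg.det)
    (hV1 : V1ᵀ * V1 = 1) (hV12 : V1ᵀ * V2 = 0)
    (hC : C = P1 * Sg * V1ᵀ)
    (y cv : Fin p → ℝ) (Gv : Matrix (Fin p) (Fin nv) ℝ)
    (M : ℝ) (hM : 0 < M)
    (cxy : Fin n → ℝ) (hcxy : cxy = (V1 * Sg⁻¹ * P1ᵀ) *ᵥ (y - cv))
    (Gxy : Matrix (Fin n) (Fin nv ⊕ Fin (n - p)) ℝ)
    (hGxy : Gxy = fromCols (V1 * Sg⁻¹ * P1ᵀ * Gv) (M • V2)) :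
    C *ᵥ cxy = y - cv ∧
    C * Gxy = fromCols Gv (0 : Matrix (Fin p) (Fin (n - p)) ℝ) ∧
    ∀ x ∈ Zono cxy Gxy, ∃ ξ : Fin nv → ℝ, (∀ i, |ξ i| ≤ 1) ∧
      C *ᵥ x = y - cv - Gv *ᵥ ξ := by

  have key : C * (V1 * Sg⁻¹ * P1ᵀ) = 1 := by
    rw [hC]
    have : P1 * Sg * V1ᵀ * (V1 * Sg⁻¹ * P1ᵀ) = P1 * (Sg * ((V1ᵀ * V1) * (Sg⁻¹ * P1ᵀ))) := by
      simp only [Matrix.mul_assoc]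
    rw [this, hV1, Matrix.one_mul, ← Matrix.mul_assoc Sg,
      Matrix.mul_nonsing_inv _ hSg, Matrix.one_mul, hP1']
  have hCV2 : C * V2 = 0 := by
    rw [hC, Matrix.mul_assoc, hV12, Matrix.mul_zero]
  have h1 : C *ᵥ cxy = y - cv := by
    rw [hcxy, Matrix.mulVec_mulVec, key, Matrix.one_mulVec]
  have h2 : C * Gxy = fromCols Gv (0 : Matrix (Fin p) (Fin (n - p)) ℝ) := by
    rw [hGxy, Matrix.mul_fromCols, ← Matrix.mul_assoc, key, Matrix.one_mul,
      Matrix.mul_smul, hCV2, smul_zero]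
  refine ⟨h1, h2, ?_⟩
  rintro x ⟨ξ, hξ, rfl⟩
  refine ⟨fun i => -ξ (Sum.inl i), fun i => by rw [abs_neg]; exact hξ _, ?_⟩
  rw [Matrix.mulVec_add, h1, Matrix.mulVec_mulVec, h2]
  have hξeq : ξ = Sum.elim (fun i => ξ (Sum.inl i)) (fun i => ξ (Sum.inr i)) := by
    ext (i | i) <;> rfl
  conv_lhs => rw [hξeq]
  rw [Matrix.fromCols_mulVec_sumElim, Matrix.zero_mulVec, add_zero]
  have hneg : (fun i => -ξ (Sum.inl i)) = -(fun i => ξ (Sum.inl i)) := rfl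
  rw [hneg, Matrix.mulVec_neg, sub_neg_eq_add]
end

section
/- Let C ∈ ℝ^{p×n} admit a decomposition C = P₁ Σ V₁ᵀ where P₁ ∈ ℝ^{p×p} is orthogonal, Σ ∈ ℝ^{p×p} is invertible, V₁ ∈ ℝ^{n×p} and V₂ ∈ ℝ^{n×(n−p)} satisfy V₁ᵀV₁ = I_p, V₂ᵀV₂ = I_{n−p}, V₁ᵀV₂ = 0, and V₁V₁ᵀ + V₂V₂ᵀ = I_n. Given y ∈ ℝ^p, a noise zonotope Z(c_v, G_v) with G_v ∈ ℝ^{p×n_v}, and M > 0, define c_{x|y} = V₁Σ⁻¹P₁ᵀ(y − c_v) and G_{x|y} = [V₁Σ⁻¹P₁ᵀG_v M·V₂]. If x ∈ ℝ^n satisfies C x = y − c_v − G_v ξ for some ξ ∈ [-1,1]^{n_v} and additionally ‖V₂ᵀ x‖_∞ ≤ M, then x belongs to the zonotope Z(c_{x|y}, G_{x|y}). -/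
open Matrix

/-- If `C x = y − c_v − G_v ξ` for some `ξ ∈ [-1,1]^{n_v}` and `‖V₂ᵀ x‖_∞ ≤ M`,
then `x` belongs to the reverse-mapping zonotope `Z(c_{x|y}, G_{x|y})`. -/
theorem mem_reverse_mapping_zonotope {n p nv : ℕ}
    (C : Matrix (Fin p) (Fin n) ℝ)
    (P1 Sg : Matrix (Fin p) (Fin p) ℝ)
    (V1 : Matrix (Fin n) (Fin p) ℝ) (V2 : Matrix (Fin n) (Fin (n - p)) ℝ)
    (hP1 : P1ᵀ * P1 = 1) (hP1' : P1 * P1ᵀ = 1)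
    (hSg : IsUnit Sg.det)
    (hV1 : V1ᵀ * V1 = 1) (hV2 : V2ᵀ * V2 = 1) (hV12 : V1ᵀ * V2 = 0)
    (hcomplete : V1 * V1ᵀ + V2 * V2ᵀ = 1)
    (hC : C = P1 * Sg * V1ᵀ)
    (y cv : Fin p → ℝ) (Gv : Matrix (Fin p) (Fin nv) ℝ)
    (M : ℝ) (hM : 0 < M)
    (cxy : Fin n → ℝ) (hcxy : cxy = (V1 * Sg⁻¹ * P1ᵀ) *ᵥ (y - cv))
    (Gxy : Matrix (Fin n) (Fin nv ⊕ Fin (n - p)) ℝ)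
    (hGxy : Gxy = fromCols (V1 * Sg⁻¹ * P1ᵀ * Gv) (M • V2))
    (x : Fin n → ℝ) (ξ : Fin nv → ℝ) (hξ : ∀ i, |ξ i| ≤ 1)
    (hmeas : C *ᵥ x = y - cv - Gv *ᵥ ξ)
    (hnull : ∀ i, |(V2ᵀ *ᵥ x) i| ≤ M) :
    x ∈ Zono cxy Gxy := by
  refine ⟨Sum.elim (-ξ) (M⁻¹ • (V2ᵀ *ᵥ x)), ?_, ?_⟩
  · rintro (i | i)
    · simpa using hξ i
    · simp only [Sum.elim_inr, Pi.smul_apply, smul_eq_mul, abs_mul,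
        abs_inv, abs_of_pos hM]
      rw [inv_mul_le_iff₀ hM, mul_one]
      exact hnull i
  · rw [hGxy, fromCols_mulVec_sumElim, hcxy]
    have hMne : M ≠ 0 := ne_of_gt hM
    have h2 : (M • V2) *ᵥ (M⁻¹ • (V2ᵀ *ᵥ x)) = (V2 * V2ᵀ) *ᵥ x := by
      rw [smul_mulVec, mulVec_smul, smul_smul, mul_inv_cancel₀ hMne,
        one_smul, mulVec_mulVec]
    have h1 : (V1 * Sg⁻¹ * P1ᵀ) *ᵥ (y - cv) + (V1 * Sg⁻¹ * P1ᵀ * Gv) *ᵥ (-ξ) =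
        (V1 * V1ᵀ) *ᵥ x := by
      rw [mulVec_neg, ← mulVec_mulVec ξ (V1 * Sg⁻¹ * P1ᵀ) Gv, ← sub_eq_add_neg,
        ← mulVec_sub, ← hmeas, hC, mulVec_mulVec]
      congr 1
      simp only [Matrix.mul_assoc]
      rw [← Matrix.mul_assoc P1ᵀ P1, hP1, Matrix.one_mul,
        ← Matrix.mul_assoc Sg⁻¹ Sg, Matrix.nonsing_inv_mul Sg hSg, Matrix.one_mul]
    rw [← add_assoc, h1, h2, ← add_mulVec, hcomplete, one_mulVec]
end

section
/- Let R̃ = HZ(Gc, Gb, c, Ac, Ab, b) be a hybrid zonotope in ℝ^n and Z(c_z, G_z) a zonotope in ℝ^n with G_z ∈ ℝ^{n×p}. Then the intersection R̃ ∩ Z(c_z, G_z) is equal to the hybrid zonotope HZ([Gc 0], [Gb 0], c, Ac', Ab', b'), where Ac' is the block matrix with rows [Ac 0] and [Gc −G_z], Ab' is the block matrix with rows [Ab 0] and [Gb 0], and b' = [b; c_z − c]. -/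
open Matrix

lemma fc_mulVec {m : Type*} {a b : Type*} [Fintype a] [Fintype b]
    (A : Matrix m a ℝ) (B : Matrix m b ℝ) (v : a ⊕ b → ℝ) :
    fromCols A B *ᵥ v = A *ᵥ (v ∘ Sum.inl) + B *ᵥ (v ∘ Sum.inr) := by
  conv_lhs => rw [← Sum.elim_comp_inl_inr v]
  exact fromCols_mulVec_sumElim A B _ _

/-- Intersection of a hybrid zonotope with a zonotope, as a hybrid zonotope. -/
theorem hybrid_zonotope_inter_zonotope {n ng nb nc p : ℕ}
    (Gc : Matrix (Fin n) (Fin ng) ℝ) (Gb : Matrix (Fin n) (Fin nb) ℝ) (c : Fin n → ℝ)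
    (Ac : Matrix (Fin nc) (Fin ng) ℝ) (Ab : Matrix (Fin nc) (Fin nb) ℝ) (b : Fin nc → ℝ)
    (cz : Fin n → ℝ) (Gz : Matrix (Fin n) (Fin p) ℝ) :
    HZ Gc Gb c Ac Ab b ∩ Zono cz Gz
      = HZ (fromCols Gc (0 : Matrix (Fin n) (Fin p) ℝ))
          (fromCols Gb (0 : Matrix (Fin n) (Fin 0) ℝ)) c
          (fromRows (fromCols Ac (0 : Matrix (Fin nc) (Fin p) ℝ))
            (fromCols Gc (-Gz)))
          (fromRows (fromCols Ab (0 : Matrix (Fin nc) (Fin 0) ℝ))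
            (fromCols Gb (0 : Matrix (Fin n) (Fin 0) ℝ)))
          (Sum.elim b (cz - c)) := by
  ext x
  simp only [Set.mem_inter_iff, HZ, Zono, Set.mem_setOf_eq]
  constructor
  · rintro ⟨⟨ξc, ξb, hc, hb, hA, hx⟩, ξ, hξ, hz⟩
    refine ⟨Sum.elim ξc ξ, Sum.elim ξb Fin.elim0, ?_, ?_, ?_, ?_⟩
    · rintro (i | i)
      exacts [hc i, hξ i]
    · rintro (i | i)
      exacts [hb i, i.elim0]
    · funext j
      have h1 : (fun k => Sum.elim ξc ξ (Sum.inl k)) = ξc := rfl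
      have h2 : (fun k => Sum.elim ξc ξ (Sum.inr k)) = ξ := rfl
      have h3 : (fun k => Sum.elim ξb Fin.elim0 (Sum.inl k)) = ξb := rfl
      simp only [fromRows_mulVec, fc_mulVec, Pi.add_apply, Function.comp_def, h1, h2, h3]
      cases j with
      | inl i =>
          simpa using congrFun hA i
      | inr i =>
          have hxa := congrFun hx i
          have hxb := congrFun hz i
          simp only [Pi.add_apply] at hxa hxb
          simp only [Sum.elim_inr, Pi.add_apply, Pi.sub_apply, neg_mulVec, Pi.neg_apply,
            zero_mulVec, Pi.zero_apply, add_zero]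
          linarith
    · simp only [fromCols_mulVec_sumElim, zero_mulVec, add_zero]
      exact hx
  · rintro ⟨ξ', ξb', hc, hb, hA, hx⟩
    simp only [fromRows_mulVec, fc_mulVec, zero_mulVec, add_zero, neg_mulVec] at hA hx
    have hA1 := fun i => congrFun hA (Sum.inl i)
    have hA2 := fun i => congrFun hA (Sum.inr i)
    simp only [Pi.add_apply, Sum.elim_inl, Sum.elim_inr, Pi.neg_apply, Pi.sub_apply] at hA1 hA2
    refine ⟨⟨ξ' ∘ Sum.inl, ξb' ∘ Sum.inl, fun i => hc _, fun i => hb _, ?_, ?_⟩,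
      ξ' ∘ Sum.inr, fun i => hc _, ?_⟩
    · funext i
      simpa using hA1 i
    · exact hx
    · funext i
      have := hA2 i
      have hxa := congrFun hx i
      simp only [Pi.add_apply] at hxa ⊢
      linarith
end

section
/- Let R̃ = HZ(Gc, Gb, c, Ac, Ab, b) be a hybrid zonotope in ℝ^n. For sensors j = 1, …, q, let C^j ∈ ℝ^{p_j×n}, y^j ∈ ℝ^{p_j}, noise zonotopes Z(c_{v,j}, G_{v,j}) with G_{v,j} ∈ ℝ^{p_j×n_{v,j}}, and arbitrary weight matrices λ^j ∈ ℝ^{n×p_j} be given. Then the set {x ∈ R̃ : for each j = 1, …, q there exists ξ^j ∈ [-1,1]^{n_{v,j}} with y^j = C^j x + c_{v,j} + G_{v,j} ξ^j} is contained in the IN hybrid zonotope HZ(Ĝc, Ĝb, ĉ, Âc, Âb, b̂) defined by ĉ = c + Σ_{j=1}^q λ^j (y^j − C^j c − c_{v,j}), Ĝc = [(I − Σ_j λ^j C^j) Gc, −λ^1 G_{v,1}, …, −λ^q G_{v,q}], Ĝb = (I − Σ_j λ^j C^j) Gb, Âc = [Ac, 0, …, 0], Âb = Ab, b̂ = b.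 -/
open Matrix

lemma sum_mulVec' {m k : Type*} [Fintype k] {ι : Type*} (s : Finset ι)
    (M : ι → Matrix m k ℝ) (v : k → ℝ) :
    (∑ j ∈ s, M j) *ᵥ v = ∑ j ∈ s, M j *ᵥ v := by
  ext i
  simp [Matrix.mulVec, dotProduct, Matrix.sum_apply, Finset.sum_mul]
  rw [Finset.sum_comm]

/-- The measurement-consistent subset of the predicted hybrid zonotope is contained
in the implicit-intersection (IN) hybrid zonotope, for arbitrary weight matrices `λ^j`. -/
theorem measurement_consistent_subset_IN {n ng nb nc q : ℕ}
    (Gc : Matrix (Fin n) (Fin ng) ℝ) (Gb : Matrix (Fin n) (Fin nb) ℝ) (c : Fin n → ℝ)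
    (Ac : Matrix (Fin nc) (Fin ng) ℝ) (Ab : Matrix (Fin nc) (Fin nb) ℝ) (b : Fin nc → ℝ)
    (p nv : Fin q → ℕ)
    (C : ∀ j, Matrix (Fin (p j)) (Fin n) ℝ)
    (y : ∀ j, Fin (p j) → ℝ) (cv : ∀ j, Fin (p j) → ℝ)
    (Gv : ∀ j, Matrix (Fin (p j)) (Fin (nv j)) ℝ)
    (lam : ∀ j, Matrix (Fin n) (Fin (p j)) ℝ) :
    {x ∈ HZ Gc Gb c Ac Ab b |
        ∀ j, ∃ ξ : Fin (nv j) → ℝ, (∀ i, |ξ i| ≤ 1) ∧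
          y j = C j *ᵥ x + cv j + Gv j *ᵥ ξ}
      ⊆ HZ
          (fromCols ((1 - ∑ j, lam j * C j) * Gc)
            (Matrix.of fun i (a : (j : Fin q) × Fin (nv j)) => -((lam a.1 * Gv a.1) i a.2)))
          ((1 - ∑ j, lam j * C j) * Gb)
          (c + ∑ j, lam j *ᵥ (y j - C j *ᵥ c - cv j))
          (fromCols Ac (0 : Matrix (Fin nc) ((j : Fin q) × Fin (nv j)) ℝ))
          Ab b := by
  rintro x ⟨⟨ξc, ξb, hξc, hξb, hA, hx⟩, hmeas⟩
  choose ξ hξle hy using hmeas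
  set T : Matrix (Fin n) (Fin n) ℝ := ∑ j, lam j * C j with hT
  set w : ((j : Fin q) × Fin (nv j)) → ℝ := fun a => ξ a.1 a.2 with hw
  refine ⟨Sum.elim ξc w, ξb, ?_, hξb, ?_, ?_⟩
  · rintro (i | a)
    · exact hξc i
    · exact hξle a.1 a.2
  · rw [fromCols_mulVec_sumElim, Matrix.zero_mulVec, add_zero]
    exact hA
  · rw [fromCols_mulVec_sumElim]
    have hM2 : (Matrix.of fun i (a : (j : Fin q) × Fin (nv j)) =>
        -((lam a.1 * Gv a.1) i a.2)) *ᵥ w = -∑ j, (lam j * Gv j) *ᵥ ξ j := by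
      ext i
      simp only [Matrix.mulVec, dotProduct, Matrix.of_apply, neg_mul,
        Finset.sum_apply, Finset.sum_neg_distrib, neg_neg, Pi.neg_apply, Finset.sum_neg_distrib]
      congr 1
      rw [← Finset.univ_sigma_univ, Finset.sum_sigma]
    have hsub : ∀ (G : Matrix (Fin n) (Fin nb) ℝ) (v : Fin nb → ℝ),
        ((1 - T) * G) *ᵥ v = G *ᵥ v - T *ᵥ (G *ᵥ v) := by
      intro G v
      rw [Matrix.sub_mul, Matrix.one_mul, Matrix.sub_mulVec, Matrix.mulVec_mulVec]
    have hsubc : ((1 - T) * Gc) *ᵥ ξc = Gc *ᵥ ξc - T *ᵥ (Gc *ᵥ ξc) := by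
      rw [Matrix.sub_mul, Matrix.one_mul, Matrix.sub_mulVec, Matrix.mulVec_mulVec]
    have hsum : ∑ j, lam j *ᵥ (y j - C j *ᵥ c - cv j)
        = T *ᵥ (x - c) + ∑ j, (lam j * Gv j) *ᵥ ξ j := by
      rw [hT, sum_mulVec', ← Finset.sum_add_distrib]
      refine Finset.sum_congr rfl fun j _ => ?_
      rw [hy j]
      simp only [Matrix.mulVec_add, Matrix.mulVec_sub, ← Matrix.mulVec_mulVec]
      abel
    have hxc : x - c = Gc *ᵥ ξc + Gb *ᵥ ξb := by rw [hx]; abel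
    rw [hM2, hsub Gb ξb, hsubc, hsum, hxc, Matrix.mulVec_add, hx]
    abel
end

section
/- Let R̃ = HZ(Gc, Gb, c, Ac, Ab, b) be a hybrid zonotope in ℝ^n, C ∈ ℝ^{p×n}, y ∈ ℝ^p a measurement, and Z(c_v, G_v) a noise zonotope with G_v ∈ ℝ^{p×n_v}. Then the measurement-consistent set {x ∈ R̃ : C x ∈ {y − c_v − G_v ξ : ξ ∈ [-1,1]^{n_v}}} is equal to the generalized-intersection hybrid zonotope HZ([Gc 0], [Gb 0], c, Ac', Ab', b'), where Ac' is the block matrix with rows [Ac 0] and [C·Gc G_v], Ab' is the block matrix with rows [Ab 0] and [C·Gb 0], and b' = [b; y − c_v − C c]. -/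
open Matrix

/-- The measurement-consistent set `{x ∈ R̃ : C x ∈ {y − c_v − G_v ξ : ξ ∈ [-1,1]^{n_v}}}`
equals the generalized-intersection hybrid zonotope. -/
theorem generalized_intersection_measurement_update {n p ng nb nc nv : ℕ}
    (Gc : Matrix (Fin n) (Fin ng) ℝ) (Gb : Matrix (Fin n) (Fin nb) ℝ) (c : Fin n → ℝ)
    (Ac : Matrix (Fin nc) (Fin ng) ℝ) (Ab : Matrix (Fin nc) (Fin nb) ℝ) (b : Fin nc → ℝ)
    (C : Matrix (Fin p) (Fin n) ℝ) (y cv : Fin p → ℝ)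
    (Gv : Matrix (Fin p) (Fin nv) ℝ) :
    {x ∈ HZ Gc Gb c Ac Ab b |
        ∃ ξ : Fin nv → ℝ, (∀ i, |ξ i| ≤ 1) ∧ C *ᵥ x = y - cv - Gv *ᵥ ξ}
      = HZ (fromCols Gc (0 : Matrix (Fin n) (Fin nv) ℝ))
          (fromCols Gb (0 : Matrix (Fin n) (Fin 0) ℝ)) c
          (fromRows (fromCols Ac (0 : Matrix (Fin nc) (Fin nv) ℝ))
            (fromCols (C * Gc) Gv))
          (fromRows (fromCols Ab (0 : Matrix (Fin nc) (Fin 0) ℝ))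
            (fromCols (C * Gb) (0 : Matrix (Fin p) (Fin 0) ℝ)))
          (Sum.elim b (y - cv - C *ᵥ c)) := by
  have key : ∀ (ζc : Fin ng ⊕ Fin nv → ℝ) (ζb : Fin nb ⊕ Fin 0 → ℝ),
      (fromRows (fromCols Ac (0 : Matrix (Fin nc) (Fin nv) ℝ))
          (fromCols (C * Gc) Gv) *ᵥ ζc +
        fromRows (fromCols Ab (0 : Matrix (Fin nc) (Fin 0) ℝ))
          (fromCols (C * Gb) (0 : Matrix (Fin p) (Fin 0) ℝ)) *ᵥ ζb
        = Sum.elim b (y - cv - C *ᵥ c))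
      ↔ (Ac *ᵥ (ζc ∘ Sum.inl) + Ab *ᵥ (ζb ∘ Sum.inl) = b ∧
          (C * Gc) *ᵥ (ζc ∘ Sum.inl) + Gv *ᵥ (ζc ∘ Sum.inr)
            + (C * Gb) *ᵥ (ζb ∘ Sum.inl) = y - cv - C *ᵥ c) := by
    intro ζc ζb
    rw [fromRows_fromCols_eq_fromBlocks, fromRows_fromCols_eq_fromBlocks,
      fromBlocks_mulVec, fromBlocks_mulVec]
    constructor
    · intro h
      refine ⟨funext fun i => ?_, funext fun i => ?_⟩
      · have := congrFun h (Sum.inl i); simpa using this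
      · have := congrFun h (Sum.inr i)
        simp only [Pi.add_apply, Sum.elim_inr, zero_mulVec, add_zero, Pi.zero_apply,
          Pi.sub_apply] at this ⊢
        linarith
    · rintro ⟨h1, h2⟩
      ext (i | i)
      · have := congrFun h1 i; simpa using this
      · have := congrFun h2 i
        simp only [Pi.add_apply, Sum.elim_inr, zero_mulVec, add_zero, Pi.zero_apply,
          Pi.sub_apply] at this ⊢
        linarith
  ext x
  simp only [Set.mem_setOf_eq, HZ]
  constructor
  · rintro ⟨⟨ξc, ξb, hc, hb, heq, hx⟩, ξ, hξ, hy⟩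
    refine ⟨Sum.elim ξc ξ, Sum.elim ξb (fun i => i.elim0), ?_, ?_, ?_, ?_⟩
    · rintro (i | i)
      · simpa using hc i
      · simpa using hξ i
    · rintro (i | i)
      · exact hb i
      · exact i.elim0
    · rw [key]
      refine ⟨by simpa using heq, funext fun i => ?_⟩
      have := congrFun hy i
      simp only [hx, mulVec_add, ← mulVec_mulVec, Pi.add_apply, Pi.sub_apply] at this
      simp only [Sum.elim_comp_inl, Sum.elim_comp_inr, ← mulVec_mulVec, Pi.add_apply,
        Pi.sub_apply]
      linarith
    · rw [hx]
      simp
  · rintro ⟨ξc, ξb, hc, hb, heq, hx⟩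
    rw [key] at heq
    obtain ⟨h1, h2⟩ := heq
    rw [← Sum.elim_comp_inl_inr ξc, ← Sum.elim_comp_inl_inr ξb,
      fromCols_mulVec_sumElim, fromCols_mulVec_sumElim] at hx
    simp only [zero_mulVec, add_zero] at hx
    refine ⟨⟨ξc ∘ Sum.inl, ξb ∘ Sum.inl, fun i => hc _, fun i => hb _, h1, hx⟩,
      ξc ∘ Sum.inr, fun i => hc _, funext fun i => ?_⟩
    have := congrFun h2 i
    have hxv : (C *ᵥ x) i = (C *ᵥ (Gc *ᵥ (ξc ∘ Sum.inl))) i + (C *ᵥ (Gb *ᵥ (ξb ∘ Sum.inl))) i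
        + (C *ᵥ c) i := by
      rw [hx]; simp [mulVec_add]
    simp only [← mulVec_mulVec, Pi.add_apply, Pi.sub_apply] at this ⊢
    linarith
end

section
/- Let R̃ ⊆ ℝ^n be any set and let C ∈ ℝ^{p×n} admit a decomposition C = P₁ Σ V₁ᵀ where P₁ ∈ ℝ^{p×p} is orthogonal, Σ ∈ ℝ^{p×p} is invertible, V₁ ∈ ℝ^{n×p} and V₂ ∈ ℝ^{n×(n−p)} satisfy V₁ᵀV₁ = I_p, V₂ᵀV₂ = I_{n−p}, V₁ᵀV₂ = 0, and V₁V₁ᵀ + V₂V₂ᵀ = I_n. Let y ∈ ℝ^p, let Z(c_v, G_v) be a noise zonotope with G_v ∈ ℝ^{p×n_v}, and let M > 0 satisfy ‖V₂ᵀ x‖_∞ ≤ M for every x ∈ R̃. Define c_{x|y} = V₁Σ⁻¹P₁ᵀ(y − c_v) and G_{x|y} = [V₁Σ⁻¹P₁ᵀG_v M·V₂]. Then the GI set {x ∈ R̃ : C x ∈ {y − c_v − G_v ξ : ξ ∈ [-1,1]^{n_v}}} is contained in the RM set R̃ ∩ Z(c_{x|y}, G_{x|y}). -/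
open Matrix

/-- GI ⊆ RM: the measurement-consistent subset of `R̃` is contained in the
intersection of `R̃` with the reverse-mapping zonotope `Z(c_{x|y}, G_{x|y})`. -/
theorem GI_subset_RM {n p nv : ℕ}
    (Rt : Set (Fin n → ℝ))
    (C : Matrix (Fin p) (Fin n) ℝ)
    (P1 Sg : Matrix (Fin p) (Fin p) ℝ)
    (V1 : Matrix (Fin n) (Fin p) ℝ) (V2 : Matrix (Fin n) (Fin (n - p)) ℝ)
    (hP1 : P1ᵀ * P1 = 1) (hP1' : P1 * P1ᵀ = 1)
    (hSg : IsUnit Sg.det)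
    (hV1 : V1ᵀ * V1 = 1) (hV2 : V2ᵀ * V2 = 1) (hV12 : V1ᵀ * V2 = 0)
    (hcomplete : V1 * V1ᵀ + V2 * V2ᵀ = 1)
    (hC : C = P1 * Sg * V1ᵀ)
    (y cv : Fin p → ℝ) (Gv : Matrix (Fin p) (Fin nv) ℝ)
    (M : ℝ) (hM : 0 < M)
    (hbound : ∀ x ∈ Rt, ∀ i, |(V2ᵀ *ᵥ x) i| ≤ M)
    (cxy : Fin n → ℝ) (hcxy : cxy = (V1 * Sg⁻¹ * P1ᵀ) *ᵥ (y - cv))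
    (Gxy : Matrix (Fin n) (Fin nv ⊕ Fin (n - p)) ℝ)
    (hGxy : Gxy = fromCols (V1 * Sg⁻¹ * P1ᵀ * Gv) (M • V2)) :
    {x ∈ Rt | ∃ ξ : Fin nv → ℝ, (∀ i, |ξ i| ≤ 1) ∧ C *ᵥ x = y - cv - Gv *ᵥ ξ}
      ⊆ Rt ∩ Zono cxy Gxy := by
  rintro x ⟨hxR, ξ, hξ, hCx⟩
  refine ⟨hxR, Sum.elim (-ξ) (M⁻¹ • (V2ᵀ *ᵥ x)), ?_, ?_⟩
  · rintro (i | i)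
    · simpa using hξ i
    · simp only [Sum.elim_inr, Pi.smul_apply, smul_eq_mul, abs_mul,
        abs_inv, abs_of_pos hM]
      rw [inv_mul_le_iff₀ hM, mul_one]
      exact hbound x hxR i
  · have hkey : V1 * Sg⁻¹ * P1ᵀ * C = V1 * V1ᵀ := by
      rw [hC]
      simp only [Matrix.mul_assoc]
      rw [← Matrix.mul_assoc P1ᵀ P1, hP1, Matrix.one_mul, ← Matrix.mul_assoc Sg⁻¹ Sg,
        Matrix.nonsing_inv_mul Sg hSg, Matrix.one_mul]
    have h1 : (V1 * Sg⁻¹ * P1ᵀ) *ᵥ (y - cv - Gv *ᵥ ξ) = (V1 * V1ᵀ) *ᵥ x := by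
      rw [← hCx, mulVec_mulVec, hkey]
    have h2 : x = (V1 * V1ᵀ) *ᵥ x + V2 *ᵥ (V2ᵀ *ᵥ x) := by
      rw [mulVec_mulVec, ← add_mulVec, hcomplete, one_mulVec]
    rw [hGxy, fromCols_mulVec_sumElim, hcxy]
    have hMV2 : (M • V2) *ᵥ (M⁻¹ • (V2ᵀ *ᵥ x)) = V2 *ᵥ (V2ᵀ *ᵥ x) := by
      rw [smul_mulVec, mulVec_smul, smul_smul, mul_inv_cancel₀ hM.ne', one_smul]
    rw [hMV2]
    have h3 : (V1 * Sg⁻¹ * P1ᵀ) *ᵥ (y - cv - Gv *ᵥ ξ)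
        = (V1 * Sg⁻¹ * P1ᵀ) *ᵥ (y - cv) - (V1 * Sg⁻¹ * P1ᵀ * Gv) *ᵥ ξ := by
      rw [mulVec_sub, mulVec_mulVec]
    rw [mulVec_neg]
    nth_rewrite 1 [h2]
    rw [← h1, h3]
    abel
end

section
/- Let R̃ ⊆ ℝ^n be any set and let C ∈ ℝ^{p×n} admit a decomposition C = P₁ Σ V₁ᵀ where P₁ ∈ ℝ^{p×p} is orthogonal, Σ ∈ ℝ^{p×p} is invertible, V₁ ∈ ℝ^{n×p} satisfies V₁ᵀV₁ = I_p, and V₂ ∈ ℝ^{n×(n−p)} satisfies V₁ᵀV₂ = 0. Let y ∈ ℝ^p, let Z(c_v, G_v) be a noise zonotope with G_v ∈ ℝ^{p×n_v}, and let M > 0. Define c_{x|y} = V₁Σ⁻¹P₁ᵀ(y − c_v) and G_{x|y} = [V₁Σ⁻¹P₁ᵀG_v M·V₂]. Then the RM set R̃ ∩ Z(c_{x|y}, G_{x|y}) is contained in the GI set {x ∈ R̃ : C x ∈ {y − c_v − G_v ξ : ξ ∈ [-1,1]^{n_v}}}. -/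
open Matrix

/-- RM ⊆ GI: the intersection of `R̃` with the reverse-mapping zonotope
`Z(c_{x|y}, G_{x|y})` is contained in the measurement-consistent subset of `R̃`. -/
theorem RM_subset_GI {n p nv : ℕ}
    (Rt : Set (Fin n → ℝ))
    (C : Matrix (Fin p) (Fin n) ℝ)
    (P1 Sg : Matrix (Fin p) (Fin p) ℝ)
    (V1 : Matrix (Fin n) (Fin p) ℝ) (V2 : Matrix (Fin n) (Fin (n - p)) ℝ)
    (hP1 : P1ᵀ * P1 = 1) (hP1' : P1 * P1ᵀ = 1)
    (hSg : IsUnit Sg.det)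
    (hV1 : V1ᵀ * V1 = 1) (hV12 : V1ᵀ * V2 = 0)
    (hC : C = P1 * Sg * V1ᵀ)
    (y cv : Fin p → ℝ) (Gv : Matrix (Fin p) (Fin nv) ℝ)
    (M : ℝ) (hM : 0 < M)
    (cxy : Fin n → ℝ) (hcxy : cxy = (V1 * Sg⁻¹ * P1ᵀ) *ᵥ (y - cv))
    (Gxy : Matrix (Fin n) (Fin nv ⊕ Fin (n - p)) ℝ)
    (hGxy : Gxy = fromCols (V1 * Sg⁻¹ * P1ᵀ * Gv) (M • V2)) :
    Rt ∩ Zono cxy Gxy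
      ⊆ {x ∈ Rt | ∃ ξ : Fin nv → ℝ, (∀ i, |ξ i| ≤ 1) ∧ C *ᵥ x = y - cv - Gv *ᵥ ξ} := by
  rintro x ⟨hxR, ξ, hξ, hx⟩
  refine ⟨hxR, fun i => -ξ (Sum.inl i), fun i => by simpa using hξ (Sum.inl i), ?_⟩
  have hCV1 : C * (V1 * Sg⁻¹ * P1ᵀ) = 1 := by
    simp only [hC, Matrix.mul_assoc]
    rw [← Matrix.mul_assoc V1ᵀ V1, hV1, Matrix.one_mul,
      ← Matrix.mul_assoc Sg, Matrix.mul_nonsing_inv Sg hSg, Matrix.one_mul, hP1']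
  have hCV2 : C * V2 = 0 := by
    simp only [hC, Matrix.mul_assoc]
    rw [hV12, Matrix.mul_zero, Matrix.mul_zero]
  have key : ∀ v : Fin p → ℝ, C *ᵥ ((V1 * Sg⁻¹ * P1ᵀ) *ᵥ v) = v := by
    intro v; rw [mulVec_mulVec, hCV1, one_mulVec]
  have hξeq : ξ = Sum.elim (fun i => ξ (Sum.inl i)) (fun j => ξ (Sum.inr j)) := by
    funext k; cases k <;> rfl
  have hCG : C * (V1 * Sg⁻¹ * P1ᵀ * Gv) = Gv := by
    rw [← Matrix.mul_assoc, hCV1, Matrix.one_mul]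
  have h1 : C *ᵥ ((V1 * Sg⁻¹ * P1ᵀ * Gv) *ᵥ fun i => ξ (Sum.inl i))
      = Gv *ᵥ fun i => ξ (Sum.inl i) := by
    rw [mulVec_mulVec, hCG]
  have h2 : C *ᵥ ((M • V2) *ᵥ fun j => ξ (Sum.inr j)) = 0 := by
    rw [mulVec_mulVec, Matrix.mul_smul, hCV2, smul_zero, zero_mulVec]
  have hCx : C *ᵥ x = (y - cv) + Gv *ᵥ fun i => ξ (Sum.inl i) := by
    rw [hx, hcxy, hGxy, hξeq, fromCols_mulVec_sumElim, mulVec_add, mulVec_add,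
      key, h1, h2, add_zero]
    simp only [Sum.elim_inl]
  rw [hCx, show (fun i => -ξ (Sum.inl i)) = -(fun i => ξ (Sum.inl i)) from rfl, mulVec_neg]
  abel
end
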